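/- arXiv:2006.09576 — 2 statements merged into one kernel-verified Lean document; each statement's English description precedes it below -/
import Mathlib

section
/- Let L be a subdirectly irreducible pk-algebra satisfying a* ≤ C(b) ∨ T(a)* for all a, b ∈ L, and let d be its least dense element. Then every a ∈ L satisfies a ≤ d, or d ≤ a and a ≤ d', or d' ≤ a; i.e. L = [0, d] ∪ [d, d'] ∪ [d', 1]. -/
/-!
Subdirect irreducibility forces the only elements `g` with `g ∧ g' = 0` to be `0` and `1`:
otherwise the congruences `x ∧ g = y ∧ g` and `x ∧ g' = y ∧ g'` are nontrivial and meet in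
equality. With this, the Kleene identity makes every `x ∨ x'` dense, hence `d ≤ x ∨ x'`, and
also `d ≤ d'`, so that `C(d) = d` and the identity reads `a* ≤ d ∨ T(a)*`. Writing
`m = x ∧ x'`, one has `T(x) = m ∨ (m* ∧ m*')`. Applied to `m` and to `m* ∧ m*'`, the identity shows
that `e = m* ∧ (m* ∧ m*')*` satisfies `e ∧ e' = 0`, so `e = 0` (and then `x* ≤ d`) or `e = 1`
(and then `m = 0`, so `x ∈ {0, 1}`). Taking `x = b*` shows that every `b` is comparable
with `d`, and comparing both `a` and `a'` with `d` gives the three intervals.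
-/

/-- A pseudocomplemented De Morgan algebra (pm-algebra): a bounded distributive
lattice with a De Morgan involution `dm` and a pseudocomplement `pc`. -/
class PMAlgebra (L : Type*) extends DistribLattice L, BoundedOrder L where
  dm : L → L
  pc : L → L
  dm_dm : ∀ a : L, dm (dm a) = a
  dm_inf : ∀ a b : L, dm (a ⊓ b) = dm a ⊔ dm b
  pc_iff : ∀ a b : L, a ⊓ b = ⊥ ↔ b ≤ pc a

namespace PMAlgebra

variable {L : Type*} [PMAlgebra L]

/-- A congruence of a pm-algebra. -/
def IsCongruence (θ : L → L → Prop) : Prop :=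
  Equivalence θ ∧
  (∀ a b c d : L, θ a b → θ c d → θ (a ⊓ c) (b ⊓ d)) ∧
  (∀ a b c d : L, θ a b → θ c d → θ (a ⊔ c) (b ⊔ d)) ∧
  (∀ a b : L, θ a b → θ (dm a) (dm b)) ∧
  (∀ a b : L, θ a b → θ (pc a) (pc b))

/-- `L` is simple: it has more than one element and its only congruences are
equality and the total relation. -/
def Simple (L : Type*) [PMAlgebra L] : Prop :=
  Nontrivial L ∧ ∀ θ : L → L → Prop, IsCongruence θ →
    θ = (fun a b => a = b) ∨ θ = (fun _ _ => True)

/-- `L` is subdirectly irreducible: there is a congruence `μ ≠ Eq` contained in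
every congruence different from equality. -/
def SubdirectlyIrreducible (L : Type*) [PMAlgebra L] : Prop :=
  ∃ μ : L → L → Prop, IsCongruence μ ∧ μ ≠ (fun a b => a = b) ∧
    ∀ θ : L → L → Prop, IsCongruence θ → θ ≠ (fun a b => a = b) →
      ∀ a b : L, μ a b → θ a b

/-- A prime filter of the underlying lattice of `L`. -/
def IsPrimeFilter (P : Set L) : Prop :=
  P.Nonempty ∧ P ≠ Set.univ ∧
  (∀ a b : L, a ∈ P → a ≤ b → b ∈ P) ∧
  (∀ a b : L, a ∈ P → b ∈ P → a ⊓ b ∈ P) ∧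
  (∀ a b : L, a ⊔ b ∈ P → a ∈ P ∨ b ∈ P)

/-- The Birula–Rasiowa transformation. -/
def phi (P : Set L) : Set L := {a : L | dm a ∉ P}

/-- `P` is a maximal prime filter. -/
def IsMaximalPF (P : Set L) : Prop :=
  IsPrimeFilter P ∧ ∀ Q : Set L, IsPrimeFilter Q → P ⊆ Q → Q = P

/-- `P` is a minimal prime filter. -/
def IsMinimalPF (P : Set L) : Prop :=
  IsPrimeFilter P ∧ ∀ Q : Set L, IsPrimeFilter Q → Q ⊆ P → Q = P

/-- The body of `L`: prime filters that are neither maximal nor minimal. -/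
def body (L : Type*) [PMAlgebra L] : Set (Set L) :=
  {P : Set L | IsPrimeFilter P ∧ ¬ IsMaximalPF P ∧ ¬ IsMinimalPF P}

/-- The prime filter space of `L` is φ-connected. -/
def PhiConnected (L : Type*) [PMAlgebra L] : Prop :=
  ∀ S : Set (Set L), S ⊆ {P : Set L | IsPrimeFilter P} → S.Nonempty →
    (∀ P Q : Set L, P ∈ S → IsPrimeFilter Q → P ⊆ Q → Q ∈ S) →
    (∀ P Q : Set L, P ∈ S → IsPrimeFilter Q → Q ⊆ P → Q ∈ S) →
    (∀ P : Set L, P ∈ S → phi P ∈ S) →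
    S = {P : Set L | IsPrimeFilter P}

/-- The Kleene identity. -/
def Kleene (L : Type*) [PMAlgebra L] : Prop :=
  ∀ a b : L, a ⊓ dm a ≤ b ⊔ dm b

/-- The term `C(x) = (x ∧ x') ∨ (x ∧ x')*`. -/
def C (x : L) : L := (x ⊓ dm x) ⊔ pc (x ⊓ dm x)

/-- The term `T(x) = C(x) ∧ C(x)'`. -/
def T (x : L) : L := C x ⊓ dm (C x)

end PMAlgebra

open PMAlgebra

namespace PMAlgebra

variable {L : Type*} [PMAlgebra L]

theorem inf_pc_self (a : L) : a ⊓ pc a = ⊥ := (pc_iff a (pc a)).mpr le_rfl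

theorem disjoint_pc_self (a : L) : Disjoint a (pc a) := disjoint_iff.mpr (inf_pc_self a)

theorem le_pc_pc (a : L) : a ≤ pc (pc a) := (pc_iff (pc a) a).mp (by rw [inf_comm, inf_pc_self])

theorem pc_anti : Antitone (pc : L → L) := fun a b h =>
  (pc_iff a (pc b)).mp (le_bot_iff.mp ((inf_le_inf_right _ h).trans (inf_pc_self b).le))

theorem pc_sup (a b : L) : pc (a ⊔ b) = pc a ⊓ pc b := by
  refine le_antisymm (le_inf (pc_anti le_sup_left) (pc_anti le_sup_right)) ?_
  refine (pc_iff _ _).mp ?_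
  rw [inf_sup_right, ← inf_assoc, inf_pc_self, inf_left_comm, inf_pc_self, bot_inf_eq,
    inf_bot_eq, sup_bot_eq]

theorem eq_bot_of_pc_eq_top {a : L} (h : pc a = ⊤) : a = ⊥ := by
  simpa [h] using inf_pc_self a

theorem pc_inf_eq_pc_inf_inf (a w : L) : pc a ⊓ w = pc (a ⊓ w) ⊓ w := by
  refine le_antisymm (inf_le_inf_right w (pc_anti inf_le_left)) (le_inf ?_ inf_le_right)
  refine (pc_iff a _).mp ?_
  rw [← inf_assoc, inf_right_comm, inf_pc_self]

theorem dm_involutive : Function.Involutive (dm : L → L) := dm_dm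

theorem dm_anti : Antitone (dm : L → L) := fun a b h => by
  rw [← inf_eq_left.mpr h, dm_inf]
  exact le_sup_right

theorem le_dm_comm {a b : L} : a ≤ dm b ↔ b ≤ dm a :=
  ⟨fun h => dm_dm b ▸ dm_anti h, fun h => dm_dm a ▸ dm_anti h⟩

theorem dm_sup (a b : L) : dm (a ⊔ b) = dm a ⊓ dm b :=
  dm_involutive.injective (by rw [dm_inf, dm_dm, dm_dm, dm_dm])

theorem dm_bot : dm (⊥ : L) = ⊤ := top_unique (le_dm_comm.mp bot_le)

theorem dm_top : dm (⊤ : L) = ⊥ := by rw [← dm_bot, dm_dm]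

theorem inf_dm_le_dm_self (x : L) : x ⊓ dm x ≤ dm (x ⊓ dm x) := by
  rw [dm_inf, dm_dm]
  exact inf_le_right.trans le_sup_left

theorem sup_dm_eq_top {g : L} (hg : g ⊓ dm g = ⊥) : g ⊔ dm g = ⊤ :=
  dm_involutive.injective (by rw [dm_sup, dm_dm, dm_top, inf_comm, hg])

theorem C_of_le_dm {a : L} (h : a ≤ dm a) : C a = a ⊔ pc a := by
  rw [C, inf_eq_left.mpr h]

theorem C_inf_dm (x : L) : C (x ⊓ dm x) = C x := C_of_le_dm (inf_dm_le_dm_self x)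

theorem T_inf_dm (x : L) : T (x ⊓ dm x) = T x := by rw [T, T, C_inf_dm]

theorem pc_le_sup_pc_T {d : L} (hid : ∀ a b : L, pc a ≤ C b ⊔ pc (T a)) (hd : pc d = ⊥)
    (hdd : d ≤ dm d) (x : L) : pc x ≤ d ⊔ pc (T x) := by
  simpa [C_of_le_dm hdd, hd] using hid x d

theorem inf_pc_inf_dm_eq_bot {d z : L} (hdd : d ≤ dm d) (hzp : z ≤ d ⊔ pc (z ⊓ dm z))
    (hpp : pc (z ⊓ dm z) ⊓ dm (pc (z ⊓ dm z)) ≤ d) :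
    z ⊓ pc (z ⊓ dm z) ⊓ dm (z ⊓ pc (z ⊓ dm z)) = ⊥ := by
  set p := pc (z ⊓ dm z)
  have hdisj : z ⊓ dm z ⊓ p = ⊥ := inf_pc_self _
  have hdp : d ⊓ dm p ≤ dm z := by
    refine le_dm_comm.mp (hzp.trans ?_)
    rw [dm_inf, dm_dm]
    exact sup_le_sup_right hdd p
  have hz : z ⊓ p ⊓ dm z = ⊥ := by rw [inf_right_comm, hdisj]
  have hp : z ⊓ p ⊓ dm p ≤ dm z :=
    (le_inf ((inf_le_inf_right _ inf_le_right).trans hpp) inf_le_right).trans hdp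
  rw [dm_inf, inf_sup_left, hz, bot_sup_eq, ← le_bot_iff, ← hz]
  exact le_inf inf_le_left hp

theorem dm_inf_eq_dm_inf_inf {w : L} (hw : w ⊓ dm w = ⊥) (a : L) :
    dm a ⊓ w = dm (a ⊓ w) ⊓ w := by
  rw [dm_inf, inf_sup_right, inf_comm (dm w), hw, sup_bot_eq]

theorem isCongruence_inf_eq_inf {w : L} (hw : w ⊓ dm w = ⊥) :
    IsCongruence (fun x y : L => x ⊓ w = y ⊓ w) := by
  refine ⟨⟨fun _ => rfl, Eq.symm, Eq.trans⟩, ?_, ?_, ?_, ?_⟩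
  · intro a b c e h₁ h₂
    rw [inf_inf_distrib_right, h₁, h₂, ← inf_inf_distrib_right]
  · intro a b c e h₁ h₂
    rw [inf_sup_right, h₁, h₂, ← inf_sup_right]
  · intro a b h
    rw [dm_inf_eq_dm_inf_inf hw, h, ← dm_inf_eq_dm_inf_inf hw]
  · intro a b h
    rw [pc_inf_eq_pc_inf_inf, h, ← pc_inf_eq_pc_inf_inf]

theorem inf_eq_inf_rel_ne_eq {w a : L} (ha : a ⊓ w = ⊥) (ha₀ : a ≠ ⊥) :
    (fun x y : L => x ⊓ w = y ⊓ w) ≠ (fun x y => x = y) := fun h =>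
  ha₀ (by simpa [ha] using congrFun₂ h a ⊥)

/-- An element `g` with `g ∧ g' = 0` is Boolean: `g'` is its complement (`sup_dm_eq_top`). -/
def BooleanElementsTrivial (L : Type*) [PMAlgebra L] : Prop := ∀ g : L, g ⊓ dm g = ⊥ → g = ⊥ ∨ g = ⊤

theorem SubdirectlyIrreducible.booleanElementsTrivial (hsi : SubdirectlyIrreducible L) :
    BooleanElementsTrivial L := by
  intro g hg
  by_contra! hne
  obtain ⟨μ, hμ, hμ_ne, hμ_le⟩ := hsi
  obtain ⟨x, y, hxy, hx_ne_y⟩ : ∃ x y, μ x y ∧ x ≠ y := by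
    by_contra! h
    exact hμ_ne (funext₂ fun x y => propext ⟨h x y, fun e => e ▸ hμ.1.refl x⟩)
  have hg' : dm g ⊓ dm (dm g) = ⊥ := by rw [dm_dm, inf_comm, hg]
  have hdm_ne : dm g ≠ ⊥ := fun h => hne.2 (by rw [← dm_dm g, h, dm_bot])
  have h₁ := hμ_le _ (isCongruence_inf_eq_inf hg)
    (inf_eq_inf_rel_ne_eq (by rw [inf_comm, hg]) hdm_ne) x y hxy
  have h₂ := hμ_le _ (isCongruence_inf_eq_inf hg') (inf_eq_inf_rel_ne_eq hg hne.1) x y hxy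
  apply hx_ne_y
  calc x = x ⊓ g ⊔ x ⊓ dm g := by rw [← inf_sup_left, sup_dm_eq_top hg, inf_top_eq]
    _ = y ⊓ g ⊔ y ⊓ dm g := by rw [h₁, h₂]
    _ = y := by rw [← inf_sup_left, sup_dm_eq_top hg, inf_top_eq]

namespace Kleene

variable {d : L}

theorem inf_dm_le_dm_pc (hk : Kleene L) (x : L) : x ⊓ dm x ≤ dm (pc (x ⊓ dm x)) :=
  (disjoint_pc_self _).left_le_of_le_sup_left (hk x _)

theorem T_eq (hk : Kleene L) (x : L) :
    T x = x ⊓ dm x ⊔ pc (x ⊓ dm x) ⊓ dm (pc (x ⊓ dm x)) := by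
  have hm := inf_dm_le_dm_self x
  have hpm : pc (x ⊓ dm x) ≤ dm (x ⊓ dm x) := le_dm_comm.mp (hk.inf_dm_le_dm_pc x)
  rw [← T_inf_dm, T, C_of_le_dm hm, dm_sup, inf_sup_right, ← inf_assoc, ← inf_assoc,
    inf_eq_left.mpr hm, inf_eq_left.mpr (hk.inf_dm_le_dm_pc x), inf_eq_left.mpr hpm]

theorem pc_sup_dm_eq_bot [Nontrivial L] (hk : Kleene L) (hB : BooleanElementsTrivial L)
    (x : L) : pc (x ⊔ dm x) = ⊥ := by
  set k := pc (x ⊔ dm x)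
  have hdisj : Disjoint (k ⊓ dm k) (x ⊔ dm x) := (disjoint_pc_self _).symm.mono_left inf_le_left
  refine (hB k (hdisj.eq_bot_of_le (hk k x))).resolve_right fun hk_top => bot_ne_top (α := L) ?_
  obtain ⟨hx, hdx⟩ := sup_eq_bot_iff.mp (eq_bot_of_pc_eq_top hk_top)
  rw [← hdx, hx, dm_bot]

theorem le_dm_of_isLeast (hk : Kleene L) (hB : BooleanElementsTrivial L)
    (hd : IsLeast {e : L | pc e = ⊥} d) (hd_top : d ≠ ⊤) : d ≤ dm d := by
  have := nontrivial_of_ne d ⊤ hd_top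
  set z := pc (dm d)
  have hz : z ⊓ dm z ≤ dm d := by
    rw [inf_comm, ← dm_dm z, ← dm_sup, dm_dm]
    exact dm_anti (hd.2 (hk.pc_sup_dm_eq_bot hB z))
  have hdisj : Disjoint (z ⊓ dm z) (dm d) := (disjoint_pc_self (dm d)).symm.mono_left inf_le_left
  refine hd.2 ((hB z (hdisj.eq_bot_of_le hz)).resolve_right fun hz_top => hd_top ?_)
  rw [← dm_dm d, eq_bot_of_pc_eq_top hz_top, dm_bot]

theorem pc_inf_dm_pc_le (hk : Kleene L) (hD : ∀ x : L, pc x ≤ d ⊔ pc (T x)) (x : L) :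
    pc (x ⊓ dm x) ⊓ dm (pc (x ⊓ dm x)) ≤ d := by
  set m := x ⊓ dm x
  set k := pc m ⊓ dm (pc m)
  have hm : pc m ≤ d ⊔ pc k := by
    refine (hD m).trans (sup_le_sup_left ?_ d)
    rw [T_inf_dm, hk.T_eq x]
    exact pc_anti le_sup_right
  exact (disjoint_pc_self k).left_le_of_le_sup_right (inf_le_left.trans hm)

theorem pc_le_or_eq_bot_or_eq_top (hk : Kleene L) (hB : BooleanElementsTrivial L)
    (hD : ∀ x : L, pc x ≤ d ⊔ pc (T x)) (hdd : d ≤ dm d) (x : L) :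
    pc x ≤ d ∨ x = ⊥ ∨ x = ⊤ := by
  set m := x ⊓ dm x
  set z := pc m
  have hT : pc (T x) = z ⊓ pc (z ⊓ dm z) := by rw [hk.T_eq x, pc_sup]
  have hzp : z ≤ d ⊔ pc (z ⊓ dm z) := by
    refine (hD m).trans (sup_le_sup_left ?_ d)
    rw [T_inf_dm, hT]
    exact inf_le_right
  rcases hB _ (inf_pc_inf_dm_eq_bot hdd hzp (hk.pc_inf_dm_pc_le hD z)) with he | he
  · left
    simpa only [hT, he, sup_bot_eq] using hD x
  · exact .inr (hB x (eq_bot_of_pc_eq_top (top_unique (he ▸ inf_le_left))))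

theorem le_or_ge_of_isLeast (hk : Kleene L) (hB : BooleanElementsTrivial L)
    (hD : ∀ x : L, pc x ≤ d ⊔ pc (T x)) (hdd : d ≤ dm d) (hd : IsLeast {e : L | pc e = ⊥} d)
    (b : L) : b ≤ d ∨ d ≤ b := by
  rcases hk.pc_le_or_eq_bot_or_eq_top hB hD hdd (pc b) with h | h | h
  · exact .inl ((le_pc_pc b).trans h)
  · exact .inr (hd.2 h)
  · exact .inl (eq_bot_of_pc_eq_top h ▸ bot_le)

end Kleene

end PMAlgebra

open PMAlgebra

/-- In a subdirectly irreducible pk-algebra satisfying `a* ≤ C(b) ∨ T(a)*` with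
least dense element `d`, every element lies in `[0,d] ∪ [d,d'] ∪ [d',1]`. -/
theorem eq_union_intervals {L : Type*} [PMAlgebra L]
    (hk : Kleene L) (hsi : SubdirectlyIrreducible L)
    (hid : ∀ a b : L, pc a ≤ C b ⊔ pc (T a))
    (d : L) (hd : pc d = ⊥) (hleast : ∀ e : L, pc e = ⊥ → d ≤ e) :
    ∀ a : L, a ≤ d ∨ (d ≤ a ∧ a ≤ dm d) ∨ dm d ≤ a := by
  intro a
  by_cases hd_top : d = ⊤
  · exact .inl (hd_top ▸ le_top)
  have hB := hsi.booleanElementsTrivial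
  have hd_least : IsLeast {e : L | pc e = ⊥} d := ⟨hd, hleast⟩
  have hdd := hk.le_dm_of_isLeast hB hd_least hd_top
  have hcmp := hk.le_or_ge_of_isLeast hB (pc_le_sup_pc_T hid hd hdd) hdd hd_least
  rcases hcmp a with h | h
  · exact .inl h
  rcases hcmp (dm a) with h' | h'
  · exact .inr (.inr (dm_dm a ▸ dm_anti h'))
  · exact .inr (.inl ⟨h, le_dm_comm.mp h'⟩)
end

section
/- Let L be a subdirectly irreducible pk-algebra satisfying T(a)* ∨ C(b) = C(a) ∨ T(b)* for all a, b ∈ L. Then L satisfies a* ≤ C(b) ∨ T(a)* for all a, b ∈ L, and every prime filter P in Body(L) satisfies φ(P) = P. -/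
open PMAlgebra

/-!
In a Kleene algebra every prime filter `P` is comparable with `φ(P)`. If `φ(P) ⊊ P`, some
`a ∧ a'` lies in `P`, and the Kleene law puts `a ∧ a'` below `T(a)`; so `T(a)* ∉ P` while
`C(a) ∈ P`, and the identity then forces `C(b) ∈ P` for every `b`. For a prime filter `Q ⊋ P`
and `q ∈ Q \ P` this gives `(q ∧ q')* ∈ P ⊆ Q`, hence `q' ∉ Q`, i.e. `q ∈ φ(Q) ⊆ φ(P) ⊆ P`:
so `P` is maximal. Dually, `P ⊊ φ(P)` makes `φ(P)` maximal and hence `P` minimal, because `φ`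
is an inclusion-reversing involution of the prime filters.
-/

namespace PMAlgebra

variable {L : Type*} [PMAlgebra L]

theorem dm_le_dm {a b : L} (h : a ≤ b) : dm b ≤ dm a := by
  rw [← inf_eq_left.mpr h, dm_inf]
  exact le_sup_right

theorem pc_le_pc {a b : L} (h : a ≤ b) : pc b ≤ pc a :=
  (pc_iff a (pc b)).mp <| le_bot_iff.mp <| inf_pc_self b ▸ inf_le_inf_right _ h

theorem pc_le_C (a : L) : pc a ≤ C a :=
  (pc_le_pc inf_le_left).trans le_sup_right

theorem inf_dm_le_T (hk : Kleene L) (a : L) : a ⊓ dm a ≤ T a := by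
  set d := a ⊓ dm a
  have hd_le_dm : d ≤ dm d := by
    rw [dm_inf, dm_dm]
    exact inf_le_right.trans le_sup_left
  have hd_le_dm_pc : d ≤ dm (pc d) :=
    calc d ≤ d ⊓ (pc d ⊔ dm (pc d)) := le_inf le_rfl (hk a (pc d))
      _ = d ⊓ dm (pc d) := by rw [inf_sup_left, inf_pc_self, bot_sup_eq]
      _ ≤ dm (pc d) := inf_le_right
  refine le_inf le_sup_left ?_
  rw [C, dm_sup]
  exact le_inf hd_le_dm hd_le_dm_pc

namespace IsPrimeFilter

variable {P : Set L}

theorem mem_of_le (hP : IsPrimeFilter P) {a b : L} (ha : a ∈ P) (hab : a ≤ b) : b ∈ P :=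
  hP.2.2.1 a b ha hab

theorem inf_mem (hP : IsPrimeFilter P) {a b : L} (ha : a ∈ P) (hb : b ∈ P) : a ⊓ b ∈ P :=
  hP.2.2.2.1 a b ha hb

theorem mem_or_mem (hP : IsPrimeFilter P) {a b : L} (h : a ⊔ b ∈ P) : a ∈ P ∨ b ∈ P :=
  hP.2.2.2.2 a b h

theorem top_mem (hP : IsPrimeFilter P) : (⊤ : L) ∈ P :=
  hP.1.elim fun _ hx => hP.mem_of_le hx le_top

theorem bot_notMem (hP : IsPrimeFilter P) : (⊥ : L) ∉ P := fun h =>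
  hP.2.1 <| Set.eq_univ_of_forall fun _ => hP.mem_of_le h bot_le

theorem pc_notMem (hP : IsPrimeFilter P) {a : L} (ha : a ∈ P) : pc a ∉ P := fun h =>
  hP.bot_notMem (inf_pc_self a ▸ hP.inf_mem ha h)

theorem phi (hP : IsPrimeFilter P) : IsPrimeFilter (phi P) := by
  refine ⟨⟨⊤, ?_⟩, ?_, ?_, ?_, ?_⟩
  · show dm ⊤ ∉ P
    rw [dm_top]
    exact hP.bot_notMem
  · intro h
    have hbot : dm (⊥ : L) ∉ P := show (⊥ : L) ∈ PMAlgebra.phi P from h ▸ Set.mem_univ _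
    rw [dm_bot] at hbot
    exact hbot hP.top_mem
  · intro a b ha hab hb
    exact ha (hP.mem_of_le hb (dm_le_dm hab))
  · intro a b ha hb h
    rw [dm_inf] at h
    exact (hP.mem_or_mem h).elim ha hb
  · intro a b h
    by_contra! hab
    exact h (dm_sup a b ▸ hP.inf_mem (not_not.mp hab.1) (not_not.mp hab.2))

theorem phi_subset_or_subset_phi (hk : Kleene L) (hP : IsPrimeFilter P) :
    PMAlgebra.phi P ⊆ P ∨ P ⊆ PMAlgebra.phi P := by
  by_contra! h
  obtain ⟨⟨x, hx, hxP⟩, ⟨y, hyP, hy⟩⟩ := And.imp Set.not_subset.mp Set.not_subset.mp h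
  have hxx : x ⊔ dm x ∈ P := hP.mem_of_le (hP.inf_mem hyP (not_not.mp hy)) (hk y x)
  exact (hP.mem_or_mem hxx).elim hxP hx

end IsPrimeFilter

theorem phi_phi (P : Set L) : phi (phi P) = P := by
  ext a
  show ¬¬dm (dm a) ∈ P ↔ a ∈ P
  rw [dm_dm, not_not]

theorem phi_anti {P Q : Set L} (h : P ⊆ Q) : phi Q ⊆ phi P :=
  fun _ ha hm => ha (h hm)

theorem phi_injective : Function.Injective (phi : Set L → Set L) :=
  Function.LeftInverse.injective phi_phi

theorem IsMinimalPF.of_isMaximalPF_phi {P : Set L} (hP : IsPrimeFilter P)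
    (hmax : IsMaximalPF (phi P)) : IsMinimalPF P :=
  ⟨hP, fun _ hQ hQP => phi_injective (hmax.2 _ hQ.phi (phi_anti hQP))⟩

theorem C_mem_of_inf_dm_mem (hid : ∀ a b : L, pc (T a) ⊔ C b = C a ⊔ pc (T b))
    (hk : Kleene L) {P : Set L} (hP : IsPrimeFilter P) {a : L} (ha : a ⊓ dm a ∈ P)
    (b : L) : C b ∈ P := by
  have hTa : pc (T a) ∉ P := fun h =>
    hP.pc_notMem ha (hP.mem_of_le h (pc_le_pc (inf_dm_le_T hk a)))
  have h : pc (T a) ⊔ C b ∈ P := hid a b ▸ hP.mem_of_le ha (le_sup_left.trans le_sup_left)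
  exact (hP.mem_or_mem h).resolve_left hTa

theorem IsMaximalPF.of_phi_ssubset (hid : ∀ a b : L, pc (T a) ⊔ C b = C a ⊔ pc (T b))
    (hk : Kleene L) {P : Set L} (hP : IsPrimeFilter P) (hφ : phi P ⊂ P) : IsMaximalPF P := by
  obtain ⟨a, haP, hda⟩ := Set.exists_of_ssubset hφ
  have hC : ∀ b, C b ∈ P := C_mem_of_inf_dm_mem hid hk hP (hP.inf_mem haP (not_not.mp hda))
  refine ⟨hP, fun Q hQ hPQ => Set.Subset.antisymm ?_ hPQ⟩
  intro q hqQ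
  by_contra hqP
  have hpc : pc (q ⊓ dm q) ∈ P :=
    (hP.mem_or_mem (hC q)).resolve_left fun h => hqP (hP.mem_of_le h inf_le_left)
  have hdq : dm q ∉ Q := fun h => hQ.pc_notMem (hQ.inf_mem hqQ h) (hPQ hpc)
  exact hqP (hφ.subset (phi_anti hPQ hdq))

end PMAlgebra

theorem of_gamma_symmetric_general {L : Type*} [PMAlgebra L]
    (hk : Kleene L)
    (hid : ∀ a b : L, pc (T a) ⊔ C b = C a ⊔ pc (T b)) :
    (∀ a b : L, pc a ≤ C b ⊔ pc (T a)) ∧ ∀ P ∈ body L, phi P = P := by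
  refine ⟨fun a b => ?_, ?_⟩
  · calc pc a ≤ C a ⊔ pc (T b) := le_sup_of_le_left (pc_le_C a)
      _ = C b ⊔ pc (T a) := by rw [← hid, sup_comm]
  · rintro P ⟨hP, hnmax, hnmin⟩
    rcases hP.phi_subset_or_subset_phi hk with hsub | hsub
    · by_contra hne
      exact hnmax (IsMaximalPF.of_phi_ssubset hid hk hP (hsub.ssubset_of_ne hne))
    · by_contra hne
      refine hnmin (IsMinimalPF.of_isMaximalPF_phi hP
        (IsMaximalPF.of_phi_ssubset hid hk hP.phi ?_))
      rw [phi_phi]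
      exact hsub.ssubset_of_ne (Ne.symm hne)

/-- A subdirectly irreducible pk-algebra satisfying
`T(a)* ∨ C(b) = C(a) ∨ T(b)*` satisfies `a* ≤ C(b) ∨ T(a)*`, and every prime
filter in its body is a fixed point of `φ`. -/
theorem of_gamma_symmetric {L : Type*} [PMAlgebra L]
    (hk : Kleene L) (hsi : SubdirectlyIrreducible L)
    (hid : ∀ a b : L, pc (T a) ⊔ C b = C a ⊔ pc (T b)) :
    (∀ a b : L, pc a ≤ C b ⊔ pc (T a)) ∧ ∀ P ∈ body L, phi P = P :=
  of_gamma_symmetric_general hk hid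
end
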